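/- For every p ∈ (1,∞] there exists a constant b_p > 0, depending only on p and on the fixed profile χ̃ (in particular independent of ρ ≥ 1), such that for every ρ ≥ 1 and every t ≥ 0 one has ‖∇u^χ(·,t)‖_{L^p(ℝ²)} ≤ b_p (1+t)^{-(1 - 1/p)} (with the convention 1/p = 0 for p = ∞). -/

import Mathlib

open MeasureTheory Filter
open scoped Classical ENNReal NNReal
open scoped Topology

noncomputable section

abbrev E2 := EuclideanSpace ℝ (Fin 2)

/-- The vector `(a, b)` in `ℝ²` (with the Euclidean norm). -/
def vec2 (a b : ℝ) : E2 := (WithLp.equiv 2 (Fin 2 → ℝ)).symm ![a, b]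

/-- `x^⊥ = (-x₂, x₁)`. -/
def perp (x : E2) : E2 := vec2 (-(x 1)) (x 0)

/-- The Oseen vortex velocity field. -/
def theta (t : ℝ) (x : E2) : E2 :=
  if x = 0 then 0 else
    ((1 - Real.exp (-(‖x‖ ^ 2) / (4 * (1 + t)))) / (2 * Real.pi * ‖x‖ ^ 2)) • perp x

/-- The Oseen vorticity (Gaussian). -/
def Xi (t : ℝ) (x : E2) : ℝ :=
  (1 / (4 * Real.pi * (1 + t))) * Real.exp (-(‖x‖ ^ 2) / (4 * (1 + t)))

/-- The `i`-th standard basis vector of `ℝ²`. -/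
def e2 (i : Fin 2) : E2 := EuclideanSpace.single i 1

/-- The truncated Oseen vortex `u^χ(x,t) = χ̃(x/ρ) Θ(x,t)`. -/
def uchi (χt : E2 → ℝ) (ρ t : ℝ) (x : E2) : E2 := χt (ρ⁻¹ • x) • theta t x




def perpL : E2 →L[ℝ] E2 := LinearMap.toContinuousLinearMap
  { toFun := perp
    map_add' := by
      intro x y; apply PiLp.ext; intro i
      fin_cases i <;> simp [perp, vec2, PiLp.add_apply] <;> try ring
    map_smul' := by
      intro c x; apply PiLp.ext; intro i
      fin_cases i <;> simp [perp, vec2, PiLp.smul_apply, smul_eq_mul] }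

lemma perpL_apply (x : E2) : perpL x = perp x := rfl

/-- scalar profile -/
def psi (s u : ℝ) : ℝ := (1 - Real.exp (-u / (4 * s))) / (2 * Real.pi * u)

def psi' (s u : ℝ) : ℝ :=
  (Real.exp (-u / (4 * s)) * (u / (4 * s)) - (1 - Real.exp (-u / (4 * s)))) /
    (2 * Real.pi * u ^ 2)

lemma psi_hasDerivAt (s u : ℝ) (hs : 0 < s) (hu : 0 < u) :
    HasDerivAt (psi s) (psi' s u) u := by
  have h1 : HasDerivAt (fun v : ℝ => -v / (4 * s)) (-1 / (4 * s)) u := by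
    simpa using ((hasDerivAt_id u).neg.div_const (4 * s))
  have h2 := h1.exp
  have h3 := (hasDerivAt_const u (1:ℝ)).sub h2
  have h4 : HasDerivAt (fun v : ℝ => 2 * Real.pi * v) (2 * Real.pi) u := by
    simpa using (hasDerivAt_id u).const_mul (2 * Real.pi)
  have hden : 2 * Real.pi * u ≠ 0 := by positivity
  have h5 := h3.div h4 hden
  refine h5.congr_deriv ?_
  have hπ : Real.pi ≠ 0 := Real.pi_ne_zero
  simp only [psi', Pi.sub_apply]
  field_simp
  ring

lemma theta_hasFDerivAt (t : ℝ) (ht : 0 ≤ t) (x : E2) (hx : x ≠ 0) :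
    HasFDerivAt (theta t)
      (psi (1 + t) (‖x‖ ^ 2) • perpL +
        ((psi' (1 + t) (‖x‖ ^ 2)) • ((2:ℕ) • (innerSL ℝ x))).smulRight (perp x)) x := by
  have hs : 0 < 1 + t := by linarith
  have hu : 0 < ‖x‖ ^ 2 := by
    have : ‖x‖ ≠ 0 := norm_ne_zero_iff.2 hx
    positivity
  have hnsq : HasFDerivAt (fun y : E2 => ‖y‖ ^ 2) ((2:ℕ) • (innerSL ℝ x)) x :=
    (hasStrictFDerivAt_norm_sq x).hasFDerivAt
  have hpsi := (psi_hasDerivAt (1 + t) (‖x‖ ^ 2) hs hu).comp_hasFDerivAt x hnsq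
  have hperp : HasFDerivAt (fun y : E2 => perpL y) perpL x := perpL.hasFDerivAt
  have h := hpsi.smul hperp
  apply h.congr_of_eventuallyEq
  have hmem : {y : E2 | y ≠ 0} ∈ 𝓝 x := isOpen_compl_singleton.mem_nhds hx
  filter_upwards [hmem] with y hy
  simp only [theta, if_neg hy, psi, Function.comp, perpL_apply]
  rfl

lemma one_sub_exp_le_one {a : ℝ} (ha : 0 ≤ a) : 1 - Real.exp (-a) ≤ 1 := by
  have := Real.exp_pos (-a); linarith

lemma one_sub_exp_nonneg {a : ℝ} (ha : 0 ≤ a) : 0 ≤ 1 - Real.exp (-a) := by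
  have : Real.exp (-a) ≤ 1 := Real.exp_le_one_iff.2 (by linarith)
  linarith

lemma one_sub_exp_le {a : ℝ} : 1 - Real.exp (-a) ≤ a := by
  have := Real.add_one_le_exp (-a); linarith

lemma aexp_le_one {a : ℝ} (ha : 0 ≤ a) : a * Real.exp (-a) ≤ 1 := by
  rw [Real.exp_neg]
  have h1 : a ≤ Real.exp a := by have := Real.add_one_le_exp a; linarith
  have h2 : 0 < Real.exp a := Real.exp_pos a
  calc a * (Real.exp a)⁻¹ ≤ Real.exp a * (Real.exp a)⁻¹ := by
        apply mul_le_mul_of_nonneg_right h1 (by positivity)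
    _ = 1 := mul_inv_cancel₀ (ne_of_gt h2)

lemma psi_nonneg {s u : ℝ} (hs : 1 ≤ s) (hu : 0 < u) : 0 ≤ psi s u := by
  have ha : (0:ℝ) ≤ u / (4 * s) := by positivity
  have h1 : 0 ≤ 1 - Real.exp (-(u / (4 * s))) := one_sub_exp_nonneg ha
  have : -u / (4 * s) = -(u / (4 * s)) := by ring
  rw [psi, this]
  positivity

lemma psi_le {s u : ℝ} (hs : 1 ≤ s) (hu : 0 < u) : psi s u ≤ 1 / (s + u) := by
  have hπ : (3:ℝ) < Real.pi := Real.pi_gt_three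
  have ha : (0:ℝ) ≤ u / (4 * s) := by positivity
  have hneg : -u / (4 * s) = -(u / (4 * s)) := by ring
  set E := Real.exp (-(u / (4 * s))) with hE
  have h0 : 0 ≤ 1 - E := one_sub_exp_nonneg ha
  have h1 : 1 - E ≤ 1 := one_sub_exp_le_one ha
  have h2 : 1 - E ≤ u / (4 * s) := one_sub_exp_le
  have h2' : (1 - E) * (4 * s) ≤ u := by
    rw [div_eq_mul_inv] at h2
    calc (1 - E) * (4 * s) ≤ u * (4 * s)⁻¹ * (4 * s) := by
          apply mul_le_mul_of_nonneg_right h2 (by positivity)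
      _ = u := by field_simp
  rw [psi, hneg, div_le_div_iff₀ (by positivity) (by positivity)]
  nlinarith [mul_nonneg h0 hu.le, mul_nonneg h0 (by positivity : (0:ℝ) ≤ s)]

lemma twou_psi'_le {s u : ℝ} (hs : 1 ≤ s) (hu : 0 < u) :
    2 * u * |psi' s u| ≤ 2 / (s + u) := by
  have hπ : (3:ℝ) < Real.pi := Real.pi_gt_three
  have ha : (0:ℝ) ≤ u / (4 * s) := by positivity
  have hneg : -u / (4 * s) = -(u / (4 * s)) := by ring
  set a := u / (4 * s) with hadef
  set E := Real.exp (-a) with hE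
  have hE0 : 0 < E := Real.exp_pos _
  have hE1 : E ≤ 1 := Real.exp_le_one_iff.2 (by linarith)
  have h0 : 0 ≤ 1 - E := one_sub_exp_nonneg ha
  have h2 : 1 - E ≤ a := one_sub_exp_le
  have h3 : a * E ≤ 1 := aexp_le_one ha
  have h4 : a * E ≤ a := by nlinarith
  have hden : (0:ℝ) < 2 * Real.pi * u ^ 2 := by positivity
  have habs : |psi' s u| ≤ (a * E + (1 - E)) / (2 * Real.pi * u ^ 2) := by
    rw [psi', hneg, ← hadef, ← hE, abs_div, abs_of_pos hden]
    gcongr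
    rw [abs_le]
    constructor <;> nlinarith
  have key : 2 * u * |psi' s u| ≤ (a * E + (1 - E)) / (Real.pi * u) := by
    calc 2 * u * |psi' s u| ≤ 2 * u * ((a * E + (1 - E)) / (2 * Real.pi * u ^ 2)) := by
          apply mul_le_mul_of_nonneg_left habs (by positivity)
      _ = (a * E + (1 - E)) / (Real.pi * u) := by
          field_simp
  rcases le_total u s with h | h
  · have hnum2 : a * E + (1 - E) ≤ 2 * a := by nlinarith
    have step : (a * E + (1 - E)) / (Real.pi * u) ≤ 2 * a / (Real.pi * u) := by
      gcongr
    have heq : 2 * a / (Real.pi * u) = 1 / (2 * Real.pi * s) := by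
      rw [hadef]
      field_simp
      ring
    have last : 1 / (2 * Real.pi * s) ≤ 2 / (s + u) := by
      rw [div_le_div_iff₀ (by positivity) (by positivity)]
      nlinarith
    calc 2 * u * |psi' s u| ≤ 2 * a / (Real.pi * u) := key.trans step
      _ = 1 / (2 * Real.pi * s) := heq
      _ ≤ 2 / (s + u) := last
  · have hnum2 : a * E + (1 - E) ≤ 2 := by nlinarith
    have step : (a * E + (1 - E)) / (Real.pi * u) ≤ 2 / (Real.pi * u) := by
      gcongr
    have last : 2 / (Real.pi * u) ≤ 2 / (s + u) := by
      rw [div_le_div_iff₀ (by positivity) (by positivity)]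
      nlinarith
    exact key.trans (step.trans last)

lemma norm_perp (x : E2) : ‖perp x‖ = ‖x‖ := by
  rw [EuclideanSpace.norm_eq, EuclideanSpace.norm_eq]
  congr 1
  simp [Fin.sum_univ_two, perp, vec2]
  ring

lemma norm_perpL_le : ‖perpL‖ ≤ 1 := by
  apply ContinuousLinearMap.opNorm_le_bound _ zero_le_one
  intro x
  rw [perpL_apply, norm_perp, one_mul]

lemma theta_eq (t : ℝ) (x : E2) (hx : x ≠ 0) :
    theta t x = psi (1 + t) (‖x‖ ^ 2) • perp x := by
  simp [theta, if_neg hx, psi]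

lemma norm_theta (t : ℝ) (ht : 0 ≤ t) (x : E2) (hx : x ≠ 0) :
    ‖theta t x‖ = psi (1 + t) (‖x‖ ^ 2) * ‖x‖ := by
  have hu : 0 < ‖x‖ ^ 2 := by
    have : ‖x‖ ≠ 0 := norm_ne_zero_iff.2 hx
    positivity
  rw [theta_eq t x hx, norm_smul, norm_perp, Real.norm_eq_abs,
    abs_of_nonneg (psi_nonneg (by linarith) hu)]

lemma norm_theta_fderiv_le (t : ℝ) (ht : 0 ≤ t) (x : E2) (hx : x ≠ 0) :
    ‖psi (1 + t) (‖x‖ ^ 2) • perpL +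
        ((psi' (1 + t) (‖x‖ ^ 2)) • ((2:ℕ) • (innerSL ℝ x))).smulRight (perp x)‖ ≤
      3 / ((1 + t) + ‖x‖ ^ 2) := by
  have hs : (1:ℝ) ≤ 1 + t := by linarith
  have hxn : ‖x‖ ≠ 0 := norm_ne_zero_iff.2 hx
  have hu : 0 < ‖x‖ ^ 2 := by positivity
  have h1 : ‖psi (1 + t) (‖x‖ ^ 2) • perpL‖ ≤ 1 / ((1 + t) + ‖x‖ ^ 2) := by
    calc ‖psi (1 + t) (‖x‖ ^ 2) • perpL‖ ≤ ‖psi (1 + t) (‖x‖ ^ 2)‖ * ‖perpL‖ :=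
          ContinuousLinearMap.opNorm_smul_le _ _
      _ = psi (1 + t) (‖x‖ ^ 2) * ‖perpL‖ := by
          rw [Real.norm_eq_abs, abs_of_nonneg (psi_nonneg hs hu)]
      _ ≤ psi (1 + t) (‖x‖ ^ 2) * 1 :=
          mul_le_mul_of_nonneg_left norm_perpL_le (psi_nonneg hs hu)
      _ = psi (1 + t) (‖x‖ ^ 2) := mul_one _
      _ ≤ 1 / ((1 + t) + ‖x‖ ^ 2) := psi_le hs hu
  have h2 : ‖((psi' (1 + t) (‖x‖ ^ 2)) • ((2:ℕ) • (innerSL ℝ x))).smulRight (perp x)‖ ≤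
      2 / ((1 + t) + ‖x‖ ^ 2) := by
    rw [ContinuousLinearMap.norm_smulRight_apply, norm_perp]
    have hinner : ‖(2:ℕ) • (innerSL ℝ x)‖ ≤ 2 * ‖x‖ := by
      rw [two_smul]
      calc ‖innerSL ℝ x + innerSL ℝ x‖ ≤ ‖innerSL ℝ x‖ + ‖innerSL ℝ x‖ := norm_add_le _ _
        _ = 2 * ‖x‖ := by rw [innerSL_apply_norm]; ring
    have hsm : ‖(psi' (1 + t) (‖x‖ ^ 2)) • ((2:ℕ) • (innerSL ℝ x))‖ ≤
        |psi' (1 + t) (‖x‖ ^ 2)| * (2 * ‖x‖) := by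
      calc ‖(psi' (1 + t) (‖x‖ ^ 2)) • ((2:ℕ) • (innerSL ℝ x))‖
          ≤ ‖psi' (1 + t) (‖x‖ ^ 2)‖ * ‖(2:ℕ) • (innerSL ℝ x)‖ :=
            ContinuousLinearMap.opNorm_smul_le _ _
        _ ≤ |psi' (1 + t) (‖x‖ ^ 2)| * (2 * ‖x‖) := by
            rw [Real.norm_eq_abs]
            exact mul_le_mul_of_nonneg_left hinner (abs_nonneg _)
    calc ‖(psi' (1 + t) (‖x‖ ^ 2)) • ((2:ℕ) • (innerSL ℝ x))‖ * ‖x‖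
        ≤ |psi' (1 + t) (‖x‖ ^ 2)| * (2 * ‖x‖) * ‖x‖ :=
          mul_le_mul_of_nonneg_right hsm (norm_nonneg x)
      _ = 2 * ‖x‖ ^ 2 * |psi' (1 + t) (‖x‖ ^ 2)| := by ring
      _ ≤ 2 / ((1 + t) + ‖x‖ ^ 2) := twou_psi'_le hs hu
  calc ‖_ + _‖ ≤ _ := norm_add_le _ _
    _ ≤ 1 / ((1 + t) + ‖x‖ ^ 2) + 2 / ((1 + t) + ‖x‖ ^ 2) := add_le_add h1 h2
    _ = 3 / ((1 + t) + ‖x‖ ^ 2) := by ring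

section chi
variable {χt : E2 → ℝ}

lemma fderiv_chi_small (hχ_smooth : ContDiff ℝ (⊤ : ℕ∞) χt)
    (hχ_zero : ∀ x : E2, ‖x‖ ≤ 1 → χt x = 0) :
    ∀ y : E2, ‖y‖ ≤ 1 → fderiv ℝ χt y = 0 := by
  have hcont : Continuous (fderiv ℝ χt) := hχ_smooth.continuous_fderiv (by simp)
  have hZ : IsClosed {y : E2 | fderiv ℝ χt y = 0} :=
    isClosed_eq hcont continuous_const
  have hball : Metric.ball (0:E2) 1 ⊆ {y : E2 | fderiv ℝ χt y = 0} := by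
    intro y hy
    have hmem : Metric.ball (0:E2) 1 ∈ 𝓝 y := Metric.isOpen_ball.mem_nhds hy
    have heq : χt =ᶠ[𝓝 y] fun _ => (0:ℝ) := by
      filter_upwards [hmem] with z hz
      exact hχ_zero z (le_of_lt (mem_ball_zero_iff.1 hz))
    show fderiv ℝ χt y = 0
    rw [heq.fderiv_eq, fderiv_fun_const]
    rfl
  intro y hy
  have : y ∈ Metric.closedBall (0:E2) 1 := mem_closedBall_zero_iff.2 hy
  rw [← closure_ball (0:E2) one_ne_zero] at this
  exact (hZ.closure_subset_iff.2 hball) this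

lemma fderiv_chi_large (hχ_smooth : ContDiff ℝ (⊤ : ℕ∞) χt)
    (hχ_one : ∀ x : E2, 2 ≤ ‖x‖ → χt x = 1) :
    ∀ y : E2, 2 ≤ ‖y‖ → fderiv ℝ χt y = 0 := by
  have hcont : Continuous (fderiv ℝ χt) := hχ_smooth.continuous_fderiv (by simp)
  have hopen : ∀ y : E2, 2 < ‖y‖ → fderiv ℝ χt y = 0 := by
    intro y hy
    have hmem : {z : E2 | 2 < ‖z‖} ∈ 𝓝 y :=
      (isOpen_lt continuous_const continuous_norm).mem_nhds hy
    have heq : χt =ᶠ[𝓝 y] fun _ => (1:ℝ) := by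
      filter_upwards [hmem] with z hz
      exact hχ_one z (le_of_lt hz)
    rw [heq.fderiv_eq, fderiv_fun_const]
    rfl
  intro y hy
  rcases lt_or_eq_of_le hy with h | h
  · exact hopen y h
  · -- ‖y‖ = 2, approximate from outside
    have hyn : Tendsto (fun n : ℕ => (1 + (n + 1 : ℝ)⁻¹) • y) atTop (𝓝 y) := by
      have h1 : Tendsto (fun n : ℕ => (1 + (n + 1 : ℝ)⁻¹)) atTop (𝓝 1) := by
        have := tendsto_one_div_add_atTop_nhds_zero_nat (𝕜 := ℝ)
        have h2 : Tendsto (fun n : ℕ => (1:ℝ) + 1 / (n + 1)) atTop (𝓝 (1 + 0)) :=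
          tendsto_const_nhds.add this
        simpa [one_div] using h2
      simpa [one_smul] using h1.smul_const y
    have hzero : ∀ n : ℕ, fderiv ℝ χt ((1 + (n + 1 : ℝ)⁻¹) • y) = 0 := by
      intro n
      apply hopen
      rw [norm_smul, Real.norm_eq_abs]
      have hpos : (0:ℝ) < (n + 1 : ℝ)⁻¹ := by positivity
      rw [abs_of_pos (by linarith), ← h]
      nlinarith [norm_nonneg y, h.symm ▸ (by norm_num : (0:ℝ) < 2)]
    have := ((hcont.tendsto y).comp hyn)
    have h0 : Tendsto (fun _ : ℕ => (0 : E2 →L[ℝ] ℝ)) atTop (𝓝 (fderiv ℝ χt y)) := by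
      refine this.congr ?_
      intro n
      exact hzero n
    exact tendsto_nhds_unique h0 tendsto_const_nhds

lemma chi_deriv_bound (hχ_smooth : ContDiff ℝ (⊤ : ℕ∞) χt)
    (hχ_one : ∀ x : E2, 2 ≤ ‖x‖ → χt x = 1) :
    ∃ M : ℝ, 0 ≤ M ∧ ∀ y : E2, ‖fderiv ℝ χt y‖ ≤ M := by
  have hcont : Continuous (fderiv ℝ χt) := hχ_smooth.continuous_fderiv (by simp)
  have hcs : HasCompactSupport (fderiv ℝ χt) := by
    apply HasCompactSupport.intro (isCompact_closedBall (0:E2) 2)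
    intro y hy
    exact fderiv_chi_large hχ_smooth hχ_one y
      (le_of_lt (by simpa [mem_closedBall_zero_iff] using hy))
    -- ∉ closedBall means ¬ ‖y‖ ≤ 2
  obtain ⟨C, hC⟩ := hcs.exists_bound_of_continuous hcont
  exact ⟨max C 0, le_max_right _ _, fun y => (hC y).trans (le_max_left _ _)⟩

end chi



lemma uchi_zero_near (χt : E2 → ℝ) (hχ_zero : ∀ x : E2, ‖x‖ ≤ 1 → χt x = 0)
    {ρ : ℝ} (hρ : 1 ≤ ρ) (t : ℝ) {y : E2} (hy : ‖y‖ ≤ ρ) : uchi χt ρ t y = 0 := by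
  have hρ0 : 0 < ρ := by linarith
  have : ‖ρ⁻¹ • y‖ ≤ 1 := by
    rw [norm_smul, Real.norm_eq_abs, abs_of_pos (by positivity)]
    rw [inv_mul_le_iff₀ hρ0, mul_one]
    exact hy
  rw [uchi, hχ_zero _ this, zero_smul]

lemma master_bound (χt : E2 → ℝ) (hχ_smooth : ContDiff ℝ (⊤ : ℕ∞) χt)
    (hχ_zero : ∀ x : E2, ‖x‖ ≤ 1 → χt x = 0)
    (hχ_one : ∀ x : E2, 2 ≤ ‖x‖ → χt x = 1)
    (hχ_range : ∀ x : E2, χt x ∈ Set.Icc (0 : ℝ) 1)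
    (M : ℝ) (hM0 : 0 ≤ M) (hM : ∀ y : E2, ‖fderiv ℝ χt y‖ ≤ M)
    (ρ : ℝ) (hρ : 1 ≤ ρ) (t : ℝ) (ht : 0 ≤ t) (x : E2) :
    ‖fderiv ℝ (uchi χt ρ t) x‖ ≤ (3 + 2 * M) / ((1 + t) + ‖x‖ ^ 2) := by
  have hρ0 : 0 < ρ := by linarith
  have hs1 : (1:ℝ) ≤ 1 + t := by linarith
  have hden : (0:ℝ) < (1 + t) + ‖x‖ ^ 2 := by positivity
  by_cases hx : x = 0
  · have heq : uchi χt ρ t =ᶠ[𝓝 x] fun _ => (0:E2) := by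
      have hmem : Metric.ball (0:E2) ρ ∈ 𝓝 x := by
        apply Metric.isOpen_ball.mem_nhds
        simp [hx, Metric.mem_ball, hρ0]
      filter_upwards [hmem] with z hz
      exact uchi_zero_near χt hχ_zero hρ t (le_of_lt (mem_ball_zero_iff.1 hz))
    rw [heq.fderiv_eq, fderiv_fun_const]
    simp only [Pi.zero_apply, norm_zero]
    positivity
  · -- x ≠ 0 : differentiate
    have hxn : ‖x‖ ≠ 0 := norm_ne_zero_iff.2 hx
    have hu : 0 < ‖x‖ ^ 2 := by positivity
    set T := psi (1 + t) (‖x‖ ^ 2) • perpL +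
        ((psi' (1 + t) (‖x‖ ^ 2)) • ((2:ℕ) • (innerSL ℝ x))).smulRight (perp x) with hT
    have hθ : HasFDerivAt (theta t) T x := theta_hasFDerivAt t ht x hx
    set B := fderiv ℝ χt (ρ⁻¹ • x) with hB
    set A := B.comp (ρ⁻¹ • ContinuousLinearMap.id ℝ E2) with hA
    have hcut : HasFDerivAt (fun y : E2 => χt (ρ⁻¹ • y)) A x := by
      have hin : HasFDerivAt (fun y : E2 => ρ⁻¹ • y)
          (ρ⁻¹ • ContinuousLinearMap.id ℝ E2) x := by
        have := (ρ⁻¹ • ContinuousLinearMap.id ℝ E2).hasFDerivAt (x := x)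
        convert this using 1
        funext y; simp
      exact ((hχ_smooth.differentiable (by simp)) (ρ⁻¹ • x)).hasFDerivAt.comp x hin
    have hU : HasFDerivAt (uchi χt ρ t) (χt (ρ⁻¹ • x) • T + A.smulRight (theta t x)) x :=
      hcut.smul hθ
    rw [hU.fderiv]
    have hbd1 : ‖χt (ρ⁻¹ • x) • T‖ ≤ 3 / ((1 + t) + ‖x‖ ^ 2) := by
      calc ‖χt (ρ⁻¹ • x) • T‖ ≤ ‖χt (ρ⁻¹ • x)‖ * ‖T‖ := ContinuousLinearMap.opNorm_smul_le _ _
        _ ≤ 1 * ‖T‖ := by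
            apply mul_le_mul_of_nonneg_right _ (norm_nonneg T)
            rw [Real.norm_eq_abs, abs_le]
            have := hχ_range (ρ⁻¹ • x)
            exact ⟨by linarith [this.1], this.2⟩
        _ = ‖T‖ := one_mul _
        _ ≤ 3 / ((1 + t) + ‖x‖ ^ 2) := norm_theta_fderiv_le t ht x hx
    have hbd2 : ‖A.smulRight (theta t x)‖ ≤ 2 * M / ((1 + t) + ‖x‖ ^ 2) := by
      rw [ContinuousLinearMap.norm_smulRight_apply]
      by_cases hsmall : ‖x‖ ≤ ρ
      · have hB0 : B = 0 := by
          apply fderiv_chi_small hχ_smooth hχ_zero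
          rw [norm_smul, Real.norm_eq_abs, abs_of_pos (by positivity)]
          rw [inv_mul_le_iff₀ hρ0, mul_one]; exact hsmall
        have : A = 0 := by rw [hA, hB0]; ext v; simp
        rw [this]
        simp only [norm_zero, zero_mul]
        positivity
      by_cases hlarge : 2 * ρ ≤ ‖x‖
      · have hB0 : B = 0 := by
          apply fderiv_chi_large hχ_smooth hχ_one
          rw [norm_smul, Real.norm_eq_abs, abs_of_pos (by positivity)]
          rw [le_inv_mul_iff₀ hρ0]
          linarith
        have : A = 0 := by rw [hA, hB0]; ext v; simp
        rw [this]
        simp only [norm_zero, zero_mul]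
        positivity
      · push_neg at hsmall hlarge
        have hAle : ‖A‖ ≤ M * ρ⁻¹ := by
          calc ‖A‖ ≤ ‖B‖ * ‖ρ⁻¹ • ContinuousLinearMap.id ℝ E2‖ :=
                ContinuousLinearMap.opNorm_comp_le _ _
            _ ≤ M * ρ⁻¹ := by
                apply mul_le_mul (hM _) _ (norm_nonneg _) hM0
                calc ‖ρ⁻¹ • ContinuousLinearMap.id ℝ E2‖
                    ≤ ‖ρ⁻¹‖ * ‖ContinuousLinearMap.id ℝ E2‖ :=
                      ContinuousLinearMap.opNorm_smul_le _ _
                  _ ≤ ρ⁻¹ * 1 := by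
                      rw [Real.norm_eq_abs, abs_of_pos (by positivity)]
                      exact mul_le_mul_of_nonneg_left ContinuousLinearMap.norm_id_le
                        (by positivity)
                  _ = ρ⁻¹ := mul_one _
        have hxpos : 0 < ‖x‖ := lt_of_le_of_lt (by positivity) hsmall
        have hρinv : ρ⁻¹ ≤ 2 / ‖x‖ := by
          have h1 : ‖x‖ / 2 ≤ ρ := by linarith
          have h2 : ρ⁻¹ ≤ (‖x‖ / 2)⁻¹ := by
            apply inv_anti₀ (by positivity) h1
          rwa [inv_div] at h2
        rw [norm_theta t ht x hx]
        have hψ0 : 0 ≤ psi (1 + t) (‖x‖ ^ 2) := psi_nonneg hs1 hu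
        calc ‖A‖ * (psi (1 + t) (‖x‖ ^ 2) * ‖x‖)
            ≤ (M * (2 / ‖x‖)) * (psi (1 + t) (‖x‖ ^ 2) * ‖x‖) := by
              apply mul_le_mul_of_nonneg_right _ (by positivity)
              exact hAle.trans (mul_le_mul_of_nonneg_left hρinv hM0)
          _ = 2 * M * psi (1 + t) (‖x‖ ^ 2) := by field_simp
          _ ≤ 2 * M * (1 / ((1 + t) + ‖x‖ ^ 2)) :=
              mul_le_mul_of_nonneg_left (psi_le hs1 hu) (by positivity)
          _ = 2 * M / ((1 + t) + ‖x‖ ^ 2) := by ring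
    calc ‖χt (ρ⁻¹ • x) • T + A.smulRight (theta t x)‖
        ≤ ‖χt (ρ⁻¹ • x) • T‖ + ‖A.smulRight (theta t x)‖ := norm_add_le _ _
      _ ≤ 3 / ((1 + t) + ‖x‖ ^ 2) + 2 * M / ((1 + t) + ‖x‖ ^ 2) := add_le_add hbd1 hbd2
      _ = (3 + 2 * M) / ((1 + t) + ‖x‖ ^ 2) := by ring

lemma oneD_integral (K q s : ℝ) (hK : 0 ≤ K) (hq : 1 < q) (hs : 0 < s) :
    ∫ y in Set.Ioi (0:ℝ), y * (K * (s + y ^ 2)⁻¹) ^ q =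
      K ^ q * s ^ (1 - q) / (2 * (q - 1)) := by
  set F : ℝ → ℝ := fun y => -(K ^ q) / (2 * (q - 1)) * (s + y ^ 2) ^ (1 - q) with hF
  have hderiv : ∀ y ∈ Set.Ici (0:ℝ), HasDerivAt F (y * (K * (s + y ^ 2)⁻¹) ^ q) y := by
    intro y _
    have hpos : (0:ℝ) < s + y ^ 2 := by positivity
    have h1 : HasDerivAt (fun y : ℝ => s + y ^ 2) (2 * y) y := by
      simpa using (hasDerivAt_pow 2 y).const_add s
    have h2 := h1.rpow_const (p := 1 - q) (Or.inl (ne_of_gt hpos))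
    have h3 := h2.const_mul (-(K ^ q) / (2 * (q - 1)))
    refine h3.congr_deriv ?_
    have he : (1:ℝ) - q - 1 = -q := by ring
    rw [he]
    rw [Real.mul_rpow hK (by positivity), Real.inv_rpow hpos.le, ← Real.rpow_neg hpos.le]
    have hne : (q:ℝ) - 1 ≠ 0 := ne_of_gt (by linarith)
    field_simp
    ring
  have hnonneg : ∀ y ∈ Set.Ioi (0:ℝ), 0 ≤ y * (K * (s + y ^ 2)⁻¹) ^ q := by
    intro y hy
    have : (0:ℝ) < y := hy
    positivity
  have htend : Tendsto F atTop (𝓝 0) := by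
    have ha : Tendsto (fun y : ℝ => s + y ^ 2) atTop atTop :=
      tendsto_atTop_add_const_left _ s (tendsto_pow_atTop two_ne_zero)
    have hb : Tendsto (fun z : ℝ => z ^ (-(q - 1))) atTop (𝓝 0) :=
      tendsto_rpow_neg_atTop (by linarith)
    have hc : Tendsto (fun y : ℝ => (s + y ^ 2) ^ (1 - q)) atTop (𝓝 0) := by
      have := hb.comp ha
      simpa [Function.comp_def, show -(q - 1) = 1 - q by ring] using this
    have := hc.const_mul (-(K ^ q) / (2 * (q - 1)))
    simpa using this
  have := integral_Ioi_of_hasDerivAt_of_nonneg' hderiv hnonneg htend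
  rw [this]
  simp only [hF]
  rw [zero_pow (two_ne_zero), add_zero]
  have hne : (q:ℝ) - 1 ≠ 0 := ne_of_gt (by linarith)
  field_simp
  ring

lemma planar_integral (K q s : ℝ) (hK : 0 ≤ K) (hq : 1 < q) (hs : 0 < s) :
    ∫ x : E2, (K * (s + ‖x‖ ^ 2)⁻¹) ^ q =
      2 * (volume (Metric.ball (0:E2) 1)).toReal * (K ^ q * s ^ (1 - q) / (2 * (q - 1))) := by
  have h := MeasureTheory.integral_fun_norm_addHaar (volume : Measure E2)
    (fun r : ℝ => (K * (s + r ^ 2)⁻¹) ^ q)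
  have hdim : Module.finrank ℝ E2 = 2 := finrank_euclideanSpace_fin
  rw [hdim] at h
  norm_num [smul_eq_mul] at h
  rw [h, ← oneD_integral K q s hK hq hs]
  simp only [Measure.real]
  ring

lemma maj_continuous (K q s : ℝ) (hq : 0 ≤ q) (hs : 0 < s) :
    Continuous (fun x : E2 => (K * (s + ‖x‖ ^ 2)⁻¹) ^ q) := by
  apply Continuous.rpow_const
  · exact continuous_const.mul ((continuous_const.add (continuous_norm.pow 2)).inv₀
      (fun x => (by positivity : s + ‖x‖ ^ 2 ≠ 0)))
  · exact fun x => Or.inr hq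

lemma maj_integrable (K q s : ℝ) (hK : 0 ≤ K) (hq : 1 < q) (hs : 1 ≤ s) :
    Integrable (fun x : E2 => (K * (s + ‖x‖ ^ 2)⁻¹) ^ q) (volume : Measure E2) := by
  have hs0 : (0:ℝ) < s := by linarith
  have hbound : Integrable (fun x : E2 => (2 * K) ^ q * (1 + ‖x‖) ^ (-(2 * q))) volume := by
    apply Integrable.const_mul
    apply integrable_one_add_norm
    rw [finrank_euclideanSpace_fin]
    norm_num
    linarith
  apply hbound.mono' ((maj_continuous K q s (by linarith) hs0).aestronglyMeasurable)
  apply ae_of_all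
  intro x
  have hr : (0:ℝ) ≤ ‖x‖ := norm_nonneg x
  have h1r : (0:ℝ) < 1 + ‖x‖ := by linarith
  have hbase : K * (s + ‖x‖ ^ 2)⁻¹ ≤ (2 * K) * ((1 + ‖x‖) ^ 2)⁻¹ := by
    have hineq : (1 + ‖x‖) ^ 2 ≤ 2 * (s + ‖x‖ ^ 2) := by nlinarith [sq_nonneg (‖x‖ - 1)]
    have h2 : ((1 + ‖x‖) ^ 2)⁻¹ ≥ (2 * (s + ‖x‖ ^ 2))⁻¹ := by
      apply inv_anti₀ (by positivity) hineq
    have h3 : (s + ‖x‖ ^ 2)⁻¹ ≤ 2 * ((1 + ‖x‖) ^ 2)⁻¹ := by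
      have e : (s + ‖x‖ ^ 2)⁻¹ = 2 * (2 * (s + ‖x‖ ^ 2))⁻¹ := by
        rw [mul_inv]
        field_simp
      rw [e]
      exact mul_le_mul_of_nonneg_left h2 (by norm_num)
    calc K * (s + ‖x‖ ^ 2)⁻¹ ≤ K * (2 * ((1 + ‖x‖) ^ 2)⁻¹) :=
          mul_le_mul_of_nonneg_left h3 hK
      _ = (2 * K) * ((1 + ‖x‖) ^ 2)⁻¹ := by ring
  rw [Real.norm_eq_abs, abs_of_nonneg (by positivity)]
  calc (K * (s + ‖x‖ ^ 2)⁻¹) ^ q ≤ ((2 * K) * ((1 + ‖x‖) ^ 2)⁻¹) ^ q :=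
        Real.rpow_le_rpow (by positivity) hbase (by linarith)
    _ = (2 * K) ^ q * (1 + ‖x‖) ^ (-(2 * q)) := by
        rw [Real.mul_rpow (by positivity) (by positivity),
          Real.inv_rpow (by positivity), ← Real.rpow_neg (by positivity),
          ← Real.rpow_natCast (1 + ‖x‖) 2, ← Real.rpow_mul (by positivity)]
        norm_num


theorem truncated_oseen_gradient_Lp_bound
    (χt : E2 → ℝ) (hχ_smooth : ContDiff ℝ (⊤ : ℕ∞) χt)
    (hχ_radial : ∀ x y : E2, ‖x‖ = ‖y‖ → χt x = χt y)
    (hχ_zero : ∀ x : E2, ‖x‖ ≤ 1 → χt x = 0)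
    (hχ_one : ∀ x : E2, 2 ≤ ‖x‖ → χt x = 1)
    (hχ_range : ∀ x : E2, χt x ∈ Set.Icc (0 : ℝ) 1)
    (p : ℝ≥0∞) (hp : 1 < p) :
    ∃ b : ℝ, 0 < b ∧ ∀ ρ : ℝ, 1 ≤ ρ → ∀ t : ℝ, 0 ≤ t →
      eLpNorm (fun x : E2 => fderiv ℝ (uchi χt ρ t) x) p (volume : Measure E2)
        ≤ ENNReal.ofReal (b * (1 + t) ^ (-(1 - (p⁻¹).toReal))) := by
  obtain ⟨M, hM0, hM⟩ := chi_deriv_bound hχ_smooth hχ_one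
  set K : ℝ := 3 + 2 * M with hKdef
  have hK0 : (0:ℝ) < K := by simp only [hKdef]; linarith
  have hmaster : ∀ ρ : ℝ, 1 ≤ ρ → ∀ t : ℝ, 0 ≤ t → ∀ x : E2,
      ‖fderiv ℝ (uchi χt ρ t) x‖ ≤ K * ((1 + t) + ‖x‖ ^ 2)⁻¹ := by
    intro ρ hρ t ht x
    rw [mul_comm, ← div_eq_inv_mul]
    exact master_bound χt hχ_smooth hχ_zero hχ_one hχ_range M hM0 hM ρ hρ t ht x
  by_cases hptop : p = ⊤
  · refine ⟨K, hK0, ?_⟩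
    intro ρ hρ t ht
    have hs0 : (0:ℝ) < 1 + t := by linarith
    subst hptop
    have hb : ∀ᵐ x : E2 ∂(volume : Measure E2),
        ‖fderiv ℝ (uchi χt ρ t) x‖ ≤ K * (1 + t)⁻¹ := by
      apply ae_of_all
      intro x
      refine (hmaster ρ hρ t ht x).trans ?_
      apply mul_le_mul_of_nonneg_left _ hK0.le
      apply inv_anti₀ hs0
      nlinarith [sq_nonneg ‖x‖]
    have h1 := eLpNormEssSup_le_of_ae_bound hb
    rw [eLpNorm_exponent_top]
    refine h1.trans ?_
    have : K * (1 + t) ^ (-(1 - ((⊤:ℝ≥0∞)⁻¹).toReal)) = K * (1 + t)⁻¹ := by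
      simp [Real.rpow_neg_one]
    rw [this]
  · -- finite p
    set q : ℝ := p.toReal with hqdef
    have hp0 : p ≠ 0 := by
      intro h
      rw [h] at hp
      exact absurd hp (by simp)
    have hq1 : 1 < q := by
      rw [hqdef]
      have := (ENNReal.toReal_lt_toReal (by simp) hptop).2 hp
      simpa using this
    have hq0 : (0:ℝ) < q := by linarith
    have hqne : q ≠ 0 := ne_of_gt hq0
    set V : ℝ := (volume (Metric.ball (0:E2) 1)).toReal with hVdef
    have hV : 0 < V := by
      rw [hVdef]
      apply ENNReal.toReal_pos
      · exact (Metric.measure_ball_pos volume (0:E2) one_pos).ne'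
      · exact measure_ball_lt_top.ne
    set b : ℝ := (V / (q - 1)) ^ (1/q) * K with hbdef
    have hb0 : 0 < b := by
      have h1 : (0:ℝ) < (V / (q - 1)) ^ (1/q) :=
        Real.rpow_pos_of_pos (div_pos hV (by linarith)) _
      exact mul_pos h1 hK0
    refine ⟨b, hb0, ?_⟩
    intro ρ hρ t ht
    have hs1 : (1:ℝ) ≤ 1 + t := by linarith
    have hs0 : (0:ℝ) < 1 + t := by linarith
    have hmono : eLpNorm (fun x : E2 => fderiv ℝ (uchi χt ρ t) x) p volume ≤
        eLpNorm (fun x : E2 => K * ((1 + t) + ‖x‖ ^ 2)⁻¹) p volume := by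
      apply eLpNorm_mono
      intro x
      rw [Real.norm_eq_abs, abs_of_nonneg (by positivity)]
      exact hmaster ρ hρ t ht x
    refine hmono.trans ?_
    -- compute the eLpNorm of the majorant
    have hint := maj_integrable K q (1 + t) hK0.le hq1 hs1
    have hnn : 0 ≤ᵐ[(volume : Measure E2)] fun x : E2 => (K * ((1 + t) + ‖x‖ ^ 2)⁻¹) ^ q :=
      ae_of_all _ (fun x => by
        have : (0:ℝ) ≤ (K * ((1 + t) + ‖x‖ ^ 2)⁻¹) ^ q := by positivity
        simpa using this)
    have hlift : ∫⁻ x : E2, ‖K * ((1 + t) + ‖x‖ ^ 2)⁻¹‖ₑ ^ q ∂volume =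
        ENNReal.ofReal (∫ x : E2, (K * ((1 + t) + ‖x‖ ^ 2)⁻¹) ^ q ∂volume) := by
      rw [MeasureTheory.ofReal_integral_eq_lintegral_ofReal hint hnn]
      apply lintegral_congr
      intro x
      rw [Real.enorm_eq_ofReal (by positivity), ENNReal.ofReal_rpow_of_nonneg (by positivity) hq0.le]
    have hval : ∫ x : E2, (K * ((1 + t) + ‖x‖ ^ 2)⁻¹) ^ q ∂volume =
        2 * V * (K ^ q * (1 + t) ^ (1 - q) / (2 * (q - 1))) :=
      planar_integral K q (1 + t) hK0.le hq1 hs0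
    have hq1' : (0:ℝ) < q - 1 := by linarith
    have hq1ne : q - 1 ≠ 0 := ne_of_gt hq1'
    have hA : (0:ℝ) ≤ 2 * V * (K ^ q * (1 + t) ^ (1 - q) / (2 * (q - 1))) := by
      apply mul_nonneg (by positivity)
      apply div_nonneg (by positivity)
      linarith
    rw [eLpNorm_eq_lintegral_rpow_enorm_toReal hp0 hptop, ← hqdef, hlift, hval,
      ENNReal.ofReal_rpow_of_nonneg hA (by positivity)]
    apply ENNReal.ofReal_le_ofReal
    have hexp : (p⁻¹).toReal = 1 / q := by
      rw [ENNReal.toReal_inv, ← hqdef, one_div]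
    rw [hexp]
    have hkey : (2 * V * (K ^ q * (1 + t) ^ (1 - q) / (2 * (q - 1)))) ^ (1/q) =
        b * (1 + t) ^ (-(1 - 1/q)) := by
      have e1 : 2 * V * (K ^ q * (1 + t) ^ (1 - q) / (2 * (q - 1))) =
          (V / (q - 1)) * (K ^ q * (1 + t) ^ (1 - q)) := by
        field_simp
      have hVq : (0:ℝ) ≤ V / (q - 1) := div_nonneg hV.le (by linarith)
      rw [e1, Real.mul_rpow hVq (by positivity),
        Real.mul_rpow (by positivity) (by positivity),
        ← Real.rpow_mul hK0.le, mul_one_div, div_self hqne, Real.rpow_one,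
        ← Real.rpow_mul hs0.le]
      have e2 : (1 - q) * (1/q) = -(1 - 1/q) := by
        field_simp
        ring
      rw [e2, hbdef]
      ring
    rw [hkey]
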